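/- arXiv:2001.06623 — 6 statements merged into one kernel-verified Lean document; each statement's English description precedes it below -/
import Mathlib

section
/- Let α > 0 be a real number. Then −∫₀¹ e^{−t} t^{α−1} log t dt < (2α+1)/(α²(α+1)²) + (cosh(1) − 1)/(α+2)². -/
open Real Set intervalIntegral

/-!
Since `-log t ≥ 0` on `(0, 1]`, the bound `exp (-t) ≤ 1 - t + t²/2` (for `t ≥ 0`) gives
`-γ'(α) ≤ ∫₀¹ (1 - t + t²/2) t^(α-1) (-log t) dt`, and `∫₀¹ t^s (-log t) dt = 1/(s+1)²` turns the
right-hand side into `1/α² - 1/(α+1)² + 1/(2(α+2)²)`. The inequality is strict because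
`cosh 1 - 1 > 1/2`.
-/

section RpowMulNegLog

variable {s : ℝ}

-- Written with `log (x ^ (s + 1))` so that continuity at `0` reduces to that of `x log x`.
lemma continuousOn_rpow_mul_neg_log_antideriv (hs : -1 < s) :
    ContinuousOn (fun x : ℝ => (x ^ (s + 1) - x ^ (s + 1) * log (x ^ (s + 1))) / (s + 1) ^ 2)
      (Ici 0) := by
  have hpow : ContinuousOn (fun x : ℝ => x ^ (s + 1)) (Ici 0) := fun x _ =>
    (continuousAt_rpow_const x (s + 1) (Or.inr (by linarith))).continuousWithinAt
  exact (hpow.sub (continuous_mul_log.comp_continuousOn hpow)).div_const _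

lemma hasDerivAt_rpow_mul_neg_log_antideriv (hs : -1 < s) {x : ℝ} (hx : 0 < x) :
    HasDerivAt (fun x : ℝ => (x ^ (s + 1) - x ^ (s + 1) * log (x ^ (s + 1))) / (s + 1) ^ 2)
      (x ^ s * -log x) x := by
  have hs1 : s + 1 ≠ 0 := by linarith
  have hpow : HasDerivAt (fun x : ℝ => x ^ (s + 1)) ((s + 1) * x ^ s) x := by
    simpa using hasDerivAt_rpow_const (p := s + 1) (Or.inl hx.ne')
  have hlog : HasDerivAt (fun y : ℝ => (s + 1) * log y) ((s + 1) * x⁻¹) x :=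
    (hasDerivAt_log hx.ne').const_mul (s + 1)
  have hF : HasDerivAt (fun y : ℝ => (y ^ (s + 1) - y ^ (s + 1) * ((s + 1) * log y)) / (s + 1) ^ 2)
      (x ^ s * -log x) x := by
    refine ((hpow.sub (hpow.mul hlog)).div_const _).congr_deriv ?_
    rw [rpow_add_one hx.ne' s]
    field_simp
    ring
  refine hF.congr_of_eventuallyEq ?_
  filter_upwards [eventually_gt_nhds hx] with y hy
  rw [log_rpow hy]

lemma intervalIntegrable_rpow_mul_neg_log (hs : -1 < s) :
    IntervalIntegrable (fun t : ℝ => t ^ s * -log t) MeasureTheory.volume 0 1 := by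
  refine intervalIntegrable_deriv_of_nonneg
    ((continuousOn_rpow_mul_neg_log_antideriv hs).mono ?_) (fun x hx => ?_) (fun x hx => ?_)
  · simp [Icc_subset_Ici_self]
  · simp only [zero_le_one, min_eq_left, max_eq_right] at hx
    exact hasDerivAt_rpow_mul_neg_log_antideriv hs hx.1
  · simp only [zero_le_one, min_eq_left, max_eq_right] at hx
    exact mul_nonneg (rpow_nonneg hx.1.le s) (neg_nonneg.2 (log_nonpos hx.1.le hx.2.le))

theorem integral_rpow_mul_neg_log (hs : -1 < s) :
    ∫ t in (0 : ℝ)..1, t ^ s * -log t = 1 / (s + 1) ^ 2 := by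
  rw [integral_eq_sub_of_hasDerivAt_of_le zero_le_one
    ((continuousOn_rpow_mul_neg_log_antideriv hs).mono Icc_subset_Ici_self)
    (fun x hx => hasDerivAt_rpow_mul_neg_log_antideriv hs hx.1)
    (intervalIntegrable_rpow_mul_neg_log hs), one_rpow, zero_rpow (by linarith)]
  simp

end RpowMulNegLog

-- `(1 + t + t²/2) (1 - t + t²/2) = 1 + t⁴/4 ≥ 1`, and `1 + t + t²/2 ≤ exp t`.
lemma exp_neg_le_one_sub_add_sq_div_two {t : ℝ} (ht : 0 ≤ t) : exp (-t) ≤ 1 - t + t ^ 2 / 2 := by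
  have hquad := quadratic_le_exp_of_nonneg ht
  rw [exp_neg, inv_le_iff_one_le_mul₀ (exp_pos t)]
  nlinarith [sq_nonneg (t - 1), pow_nonneg ht 4]

lemma one_div_two_lt_cosh_one_sub_one : 1 / 2 < cosh 1 - 1 := by
  rw [cosh_eq]
  linarith [exp_one_gt_d9, exp_neg_one_gt_d9]

lemma integral_exp_neg_mul_rpow_mul_neg_log_le {α : ℝ} (hα : 0 < α) :
    ∫ t in (0 : ℝ)..1, exp (-t) * (t ^ (α - 1) * -log t) ≤
      1 / α ^ 2 - 1 / (α + 1) ^ 2 + 1 / 2 * (1 / (α + 2) ^ 2) := by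
  have h₀ := intervalIntegrable_rpow_mul_neg_log (s := α - 1) (by linarith)
  have h₁ := intervalIntegrable_rpow_mul_neg_log (s := α) (by linarith)
  have h₂ := intervalIntegrable_rpow_mul_neg_log (s := α + 1) (by linarith)
  have hpoint : ∀ t ∈ Ioo (0 : ℝ) 1, exp (-t) * (t ^ (α - 1) * -log t) ≤
      t ^ (α - 1) * -log t - t ^ α * -log t + 1 / 2 * (t ^ (α + 1) * -log t) := by
    intro t ⟨ht₀, ht₁⟩
    have hα₁ : t ^ α = t ^ (α - 1) * t := by rw [← rpow_add_one ht₀.ne']; ring_nf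
    have hα₂ : t ^ (α + 1) = t ^ (α - 1) * t ^ 2 := by
      rw [← rpow_natCast, ← rpow_add ht₀]; ring_nf
    have hnonneg : 0 ≤ t ^ (α - 1) * -log t :=
      mul_nonneg (rpow_nonneg ht₀.le _) (neg_nonneg.2 (log_nonpos ht₀.le ht₁.le))
    calc exp (-t) * (t ^ (α - 1) * -log t) ≤ (1 - t + t ^ 2 / 2) * (t ^ (α - 1) * -log t) :=
          mul_le_mul_of_nonneg_right (exp_neg_le_one_sub_add_sq_div_two ht₀.le) hnonneg
      _ = _ := by rw [hα₁, hα₂]; ring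
  calc _ ≤ ∫ t in (0 : ℝ)..1,
        t ^ (α - 1) * -log t - t ^ α * -log t + 1 / 2 * (t ^ (α + 1) * -log t) :=
        integral_mono_on_of_le_Ioo zero_le_one
          (h₀.continuousOn_mul (continuous_exp.comp continuous_neg).continuousOn)
          ((h₀.sub h₁).add (h₂.const_mul _)) hpoint
    _ = _ := by
      rw [integral_add (h₀.sub h₁) (h₂.const_mul _), integral_sub h₀ h₁, integral_const_mul,
        integral_rpow_mul_neg_log (by linarith), integral_rpow_mul_neg_log (by linarith),
        integral_rpow_mul_neg_log (by linarith)]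
      ring_nf

theorem stmt_0 (α : ℝ) (hα : 0 < α) :
    -(∫ t in (0:ℝ)..1, Real.exp (-t) * t ^ (α - 1) * Real.log t) <
      (2 * α + 1) / (α ^ 2 * (α + 1) ^ 2) + (Real.cosh 1 - 1) / (α + 2) ^ 2 := by
  have hneg : -(∫ t in (0 : ℝ)..1, exp (-t) * t ^ (α - 1) * log t) =
      ∫ t in (0 : ℝ)..1, exp (-t) * (t ^ (α - 1) * -log t) := by
    rw [← integral_neg]
    ring_nf
  have hdiff : 1 / α ^ 2 - 1 / (α + 1) ^ 2 = (2 * α + 1) / (α ^ 2 * (α + 1) ^ 2) := by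
    field_simp
    ring
  have hcosh : 1 / 2 * (1 / (α + 2) ^ 2) < (cosh 1 - 1) / (α + 2) ^ 2 := by
    rw [mul_one_div]
    gcongr
    exact one_div_two_lt_cosh_one_sub_one
  rw [hneg, ← hdiff]
  linarith [integral_exp_neg_mul_rpow_mul_neg_log_le hα]
end

section
/- Let A be an n×n complex matrix, λ ∈ ℂⁿ and r ∈ ℝⁿ with r ≥ 0 entrywise, such that every eigenvalue μ of A (i.e., every element of the spectrum of A over ℂ) satisfies |μ − λ_i| ≤ r_i for some index i. For each i define f_i := max(Re(λ_i), ⌊Re(λ_i)⌋ − Re(λ_i), Re(λ_i) − ⌈Re(λ_i)⌉) + Im(λ_i)·𝗂. If |f_i| − r_i > 0 for every i, then no eigenvalue of A is a nonpositive integer, i.e., the spectrum of A is disjoint from {z ∈ ℂ : z = k for some integer k ≤ 0}. -/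
/-!
For `x = Re λᵢ`, the real number `max x (max (⌊x⌋ - x) (x - ⌈x⌉))` has absolute value at most the
distance from `x` to any nonpositive integer `k`: for `x > 0` it is `x ≤ x - k`, and for `x ≤ 0` it is
bounded by the distance from `x` to the nearest integer. Since `fᵢ` and `λᵢ` share their imaginary
part, `‖fᵢ‖ ≤ ‖k - λᵢ‖`. An eigenvalue `k` lying in the disc of index `i` would then give
`‖fᵢ‖ ≤ ‖k - λᵢ‖ ≤ rᵢ`, contradicting `‖fᵢ‖ > rᵢ`.
-/

theorem Complex.norm_le_norm_of_abs_re_le_of_abs_im_le {z w : ℂ} (hre : |z.re| ≤ |w.re|)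
    (him : |z.im| ≤ |w.im|) : ‖z‖ ≤ ‖w‖ := by
  refine (pow_le_pow_iff_left₀ (norm_nonneg z) (norm_nonneg w) two_ne_zero).mp ?_
  simp only [Complex.sq_norm, Complex.normSq_apply, ← sq]
  exact add_le_add (sq_le_sq.mpr hre) (sq_le_sq.mpr him)

theorem abs_max_floor_sub_sub_ceil_le (x : ℝ) (k : ℤ) :
    |max ((⌊x⌋ : ℝ) - x) (x - ⌈x⌉)| ≤ |k - x| := by
  have hfloor : (⌊x⌋ : ℝ) - x ≤ 0 := sub_nonpos.mpr (Int.floor_le x)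
  have hceil : x - (⌈x⌉ : ℝ) ≤ 0 := sub_nonpos.mpr (Int.le_ceil x)
  rw [abs_of_nonpos (max_le hfloor hceil), neg_le]
  rcases le_or_gt (k : ℝ) x with hkx | hxk
  · have : (k : ℝ) ≤ ⌊x⌋ := mod_cast Int.le_floor.mpr hkx
    rw [abs_of_nonpos (by linarith)]
    exact le_max_of_le_left (by linarith)
  · have : (⌈x⌉ : ℝ) ≤ k := mod_cast Int.ceil_le.mpr hxk.le
    rw [abs_of_pos (by linarith)]
    exact le_max_of_le_right (by linarith)

theorem abs_max_self_max_floor_sub_sub_ceil_le {x : ℝ} {k : ℤ} (hk : k ≤ 0) :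
    |max x (max ((⌊x⌋ : ℝ) - x) (x - ⌈x⌉))| ≤ |k - x| := by
  have hfloor : (⌊x⌋ : ℝ) - x ≤ 0 := sub_nonpos.mpr (Int.floor_le x)
  have hceil : x - (⌈x⌉ : ℝ) ≤ 0 := sub_nonpos.mpr (Int.le_ceil x)
  have hk' : (k : ℝ) ≤ 0 := mod_cast hk
  rcases le_or_gt x 0 with hx | hx
  · calc |max x (max ((⌊x⌋ : ℝ) - x) (x - ⌈x⌉))|
        ≤ |max ((⌊x⌋ : ℝ) - x) (x - ⌈x⌉)| :=
          abs_le_abs_of_nonpos (max_le hx (max_le hfloor hceil)) (le_max_right _ _)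
      _ ≤ |k - x| := abs_max_floor_sub_sub_ceil_le x k
  · rw [max_eq_left (max_le (by linarith) (by linarith)), abs_of_pos hx,
      abs_of_nonpos (by linarith)]
    linarith

theorem stmt_3_general {n : ℕ} (A : Matrix (Fin n) (Fin n) ℂ) (lam : Fin n → ℂ) (r : Fin n → ℝ)
    (hspec : ∀ μ ∈ spectrum ℂ A, ∃ i, ‖μ - lam i‖ ≤ r i)
    (f : Fin n → ℂ)
    (hf : ∀ i, f i =
      Complex.ofReal (max ((lam i).re) (max ((⌊(lam i).re⌋ : ℝ) - (lam i).re)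
        ((lam i).re - (⌈(lam i).re⌉ : ℝ)))) + (lam i).im * Complex.I)
    (hpos : ∀ i, 0 < ‖f i‖ - r i) :
    ∀ μ ∈ spectrum ℂ A, ∀ k : ℤ, k ≤ 0 → μ ≠ (k : ℂ) := by
  rintro μ hμ k hk rfl
  obtain ⟨i, hi⟩ := hspec _ hμ
  have hfk : ‖f i‖ ≤ ‖(k : ℂ) - lam i‖ := by
    apply Complex.norm_le_norm_of_abs_re_le_of_abs_im_le
    · simpa [hf i] using abs_max_self_max_floor_sub_sub_ceil_le (x := (lam i).re) hk
    · simp [hf i]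
  linarith [hpos i]

theorem stmt_3 {n : ℕ} (A : Matrix (Fin n) (Fin n) ℂ) (lam : Fin n → ℂ) (r : Fin n → ℝ)
    (hr : ∀ i, 0 ≤ r i)
    (hspec : ∀ μ ∈ spectrum ℂ A, ∃ i, ‖μ - lam i‖ ≤ r i)
    (f : Fin n → ℂ)
    (hf : ∀ i, f i =
      Complex.ofReal (max ((lam i).re) (max ((⌊(lam i).re⌋ : ℝ) - (lam i).re)
        ((lam i).re - (⌈(lam i).re⌉ : ℝ)))) + (lam i).im * Complex.I)
    (hpos : ∀ i, 0 < ‖f i‖ - r i) :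
    ∀ μ ∈ spectrum ℂ A, ∀ k : ℤ, k ≤ 0 → μ ≠ (k : ℂ) :=
  stmt_3_general A lam r hspec f hf hpos
end

section
/- Let λ ∈ ℂ, let Q be a p×p complex matrix and R a p×p real matrix with nonnegative entries such that |Q| ≤ R entrywise, and let t > 0. Then ‖exp((log t)·((λ−1)·I_p + Q)) − t^{λ−1}·I_p‖_∞ ≤ t^{Re(λ)−1} · |log t| · ‖R‖_∞ · e^{|log t|·‖R‖_∞}, where exp is the matrix exponential and t^{λ−1} the principal complex power of the positive real t. -/
/-!
Since `(λ - 1) I` is central, the exponential factors as `t^(λ-1) • exp ((log t) Q)`, so the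
difference is `t^(λ-1) • (exp ((log t) Q) - I)`, and `‖t^(λ-1)‖ = t^(Re λ - 1)`. The ∞-norm is a
Banach algebra norm on matrices, `|Q| ≤ R` gives `‖Q‖_∞ ≤ ‖R‖_∞`, and comparing power series
termwise gives `‖exp X - 1‖ ≤ e^‖X‖ - 1 ≤ ‖X‖ e^‖X‖` in any Banach algebra.
-/

/-- The operator ∞-norm (maximum absolute row sum) of a real matrix. -/
noncomputable def normInfR {p : ℕ} (R : Matrix (Fin p) (Fin p) ℝ) : ℝ :=
  ⨆ i, ∑ j, |R i j|

/-- The operator ∞-norm (maximum absolute row sum) of a complex matrix. -/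
noncomputable def normInfC {p : ℕ} (M : Matrix (Fin p) (Fin p) ℂ) : ℝ :=
  ⨆ i, ∑ j, ‖M i j‖

open NormedSpace

theorem normInfR_nonneg {p : ℕ} (R : Matrix (Fin p) (Fin p) ℝ) : 0 ≤ normInfR R :=
  Real.iSup_nonneg fun _ => Finset.sum_nonneg fun _ _ => abs_nonneg _

theorem normInfC_le_normInfR {p : ℕ} {Q : Matrix (Fin p) (Fin p) ℂ}
    {R : Matrix (Fin p) (Fin p) ℝ} (hQR : ∀ i j, ‖Q i j‖ ≤ R i j) : normInfC Q ≤ normInfR R :=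
  Finite.ciSup_mono fun i => Finset.sum_le_sum fun j _ => (hQR i j).trans (le_abs_self _)

theorem Real.exp_sub_one_le_mul_exp (y : ℝ) : Real.exp y - 1 ≤ y * Real.exp y :=
  calc Real.exp y - 1 = Real.exp y * (1 - Real.exp (-y)) := by
        rw [mul_sub, mul_one, ← Real.exp_add, add_neg_cancel, Real.exp_zero]
    _ ≤ Real.exp y * y := by
        gcongr
        linarith [Real.one_sub_le_exp_neg y]
    _ = y * Real.exp y := mul_comm _ _

section ExpBound

variable {𝔸 : Type*} [NormedRing 𝔸] [NormedAlgebra ℚ 𝔸] [CompleteSpace 𝔸]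

theorem norm_exp_sub_one_le_exp_norm_sub_one (x : 𝔸) : ‖exp x - 1‖ ≤ Real.exp ‖x‖ - 1 := by
  have hx := (hasSum_nat_add_iff' 1).mpr (exp_series_hasSum_exp' (𝕂 := ℚ) x)
  have hr := (hasSum_nat_add_iff' 1).mpr (exp_series_hasSum_exp' (𝕂 := ℚ) ‖x‖)
  simp only [Finset.range_one, Finset.sum_singleton, pow_zero, Nat.factorial_zero, Nat.cast_one,
    inv_one, one_smul, ← Real.exp_eq_exp_ℝ] at hx hr
  refine hx.norm_le_of_bounded hr fun n => ?_
  rw [norm_smul, Rat.smul_def, Rat.cast_inv, Rat.cast_natCast, norm_inv, ← Real.norm_natCast]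
  exact mul_le_mul_of_nonneg_left (norm_pow_le' x n.succ_pos) (by positivity)

theorem norm_exp_sub_one_le (x : 𝔸) : ‖exp x - 1‖ ≤ ‖x‖ * Real.exp ‖x‖ :=
  (norm_exp_sub_one_le_exp_norm_sub_one x).trans (Real.exp_sub_one_le_mul_exp ‖x‖)

end ExpBound

theorem exp_smul_one_add {𝕜 𝔸 : Type*} [RCLike 𝕜] [NormedRing 𝔸] [NormedAlgebra 𝕜 𝔸]
    [CompleteSpace 𝔸] (c : 𝕜) (x : 𝔸) : exp (c • (1 : 𝔸) + x) = exp c • exp x := by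
  let : NormedAlgebra ℚ 𝔸 := NormedAlgebra.restrictScalars ℚ 𝕜 𝔸
  rw [exp_add_of_commute ((Commute.one_left x).smul_left c), ← Algebra.algebraMap_eq_smul_one,
    ← algebraMap_exp_comm, Algebra.algebraMap_eq_smul_one, smul_one_mul]

section LinftyOpNorm

attribute [local instance] Matrix.linftyOpNormedRing Matrix.linftyOpNormedAlgebra

theorem normInfC_eq_norm {p : ℕ} (M : Matrix (Fin p) (Fin p) ℂ) : normInfC M = ‖M‖ := by
  simp [normInfC, Matrix.linfty_opNorm_def, Finset.sup_univ_eq_ciSup, NNReal.coe_iSup]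

theorem stmt_6_general {p : ℕ} (lam : ℂ) (Q : Matrix (Fin p) (Fin p) ℂ)
    (R : Matrix (Fin p) (Fin p) ℝ)
    (hQR : ∀ i j, ‖Q i j‖ ≤ R i j)
    (t : ℝ) (ht : 0 < t) :
    normInfC
        (NormedSpace.exp ((Real.log t : ℂ) • ((lam - 1) • (1 : Matrix (Fin p) (Fin p) ℂ) + Q))
          - ((t : ℂ) ^ (lam - 1)) • (1 : Matrix (Fin p) (Fin p) ℂ)) ≤
      t ^ (lam.re - 1) * |Real.log t| * normInfR R *
        Real.exp (|Real.log t| * normInfR R) := by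
  set L : ℝ := Real.log t
  have hpow : (t : ℂ) ^ (lam - 1) = exp ((L : ℂ) * (lam - 1)) := by
    rw [← Complex.exp_eq_exp_ℂ, Complex.cpow_def_of_ne_zero (by exact_mod_cast ht.ne'),
      Complex.ofReal_log ht.le]
  have hfactor : exp ((L : ℂ) • ((lam - 1) • (1 : Matrix (Fin p) (Fin p) ℂ) + Q))
        - ((t : ℂ) ^ (lam - 1)) • 1 = (t : ℂ) ^ (lam - 1) • (exp ((L : ℂ) • Q) - 1) := by
    have hsplit : exp (((L : ℂ) * (lam - 1)) • (1 : Matrix (Fin p) (Fin p) ℂ) + (L : ℂ) • Q) =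
        exp ((L : ℂ) * (lam - 1)) • exp ((L : ℂ) • Q) :=
      exp_smul_one_add _ _
    rw [smul_add, smul_smul, hsplit, hpow, smul_sub]
  have hLQ : ‖(L : ℂ) • Q‖ ≤ |L| * normInfR R := by
    rw [norm_smul, Complex.norm_real, Real.norm_eq_abs, ← normInfC_eq_norm]
    exact mul_le_mul_of_nonneg_left (normInfC_le_normInfR hQR) (abs_nonneg L)
  rw [hfactor, normInfC_eq_norm, norm_smul, Complex.norm_cpow_eq_rpow_re_of_pos ht, Complex.sub_re,
    Complex.one_re, mul_assoc, mul_assoc, ← mul_assoc |L|]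
  gcongr
  calc ‖exp ((L : ℂ) • Q) - 1‖ ≤ ‖(L : ℂ) • Q‖ * Real.exp ‖(L : ℂ) • Q‖ := norm_exp_sub_one_le _
    _ ≤ |L| * normInfR R * Real.exp (|L| * normInfR R) := by
      gcongr
      exact mul_nonneg (abs_nonneg L) (normInfR_nonneg R)

theorem stmt_6 {p : ℕ} (lam : ℂ) (Q : Matrix (Fin p) (Fin p) ℂ)
    (R : Matrix (Fin p) (Fin p) ℝ)
    (hR : ∀ i j, 0 ≤ R i j)
    (hQR : ∀ i j, ‖Q i j‖ ≤ R i j)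
    (t : ℝ) (ht : 0 < t) :
    normInfC
        (NormedSpace.exp ((Real.log t : ℂ) • ((lam - 1) • (1 : Matrix (Fin p) (Fin p) ℂ) + Q))
          - ((t : ℂ) ^ (lam - 1)) • (1 : Matrix (Fin p) (Fin p) ℂ)) ≤
      t ^ (lam.re - 1) * |Real.log t| * normInfR R *
        Real.exp (|Real.log t| * normInfR R) :=
  stmt_6_general lam Q R hQR t ht

end LinftyOpNorm
end

section
/- Let λ ∈ ℂ, m ≥ 1 an integer, and R a p×p real matrix with nonnegative entries. Let rr be the 1×p row vector with rr_j := max_i R_{ij}, and let 1_p be the all-ones column vector of length p. Define real p×p matrices 𝖱₀, …, 𝖱_{m−1} by 𝖱₀ := R and 𝖱_{k+1} := |λ+k+1|·𝖱_k + |∏_{i=0}^{k}(λ+i)|·R + (1_p·rr)·𝖱_k for k = 0, …, m−2. Then for any p×p complex matrices B₀, …, B_{m−1} satisfying |B_i − (λ+i)·I_p| ≤ R entrywise for all i, one has | B_{m−1}·B_{m−2}·⋯·B₀ − (∏_{i=0}^{m−1}(λ+i))·I_p | ≤ 𝖱_{m−1} entrywise. -/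
/-!
Write `B_k = (λ+k)·I + E_k` and `B_{k-1}⋯B_0 = c_k·I + F_k` with `c_k = ∏_{i<k}(λ+i)`. Then
`B_k (c_k I + F_k) - c_k(λ+k) I = (λ+k) F_k + c_k E_k + E_k F_k`, and bounding the three terms
entrywise, with `|E_k F_k| ≤ R 𝖱_{k-1} ≤ (1_p·rr) 𝖱_{k-1}`, is exactly the recursion defining `𝖱_k`.
-/

/-- The p×p matrix `1_p · rr`, where `rr_j = max_i R_{ij}`. -/
noncomputable def colMaxMat {p : ℕ} (R : Matrix (Fin p) (Fin p) ℝ) :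
    Matrix (Fin p) (Fin p) ℝ :=
  Matrix.of fun _ j => ⨆ i, R i j

/-- The radius sequence 𝖱₀ := R,
`𝖱_{k+1} := |λ+k+1|·𝖱_k + |∏_{i=0}^{k}(λ+i)|·R + (1_p·rr)·𝖱_k`. -/
noncomputable def Rseq {p : ℕ} (lam : ℂ) (R : Matrix (Fin p) (Fin p) ℝ) :
    ℕ → Matrix (Fin p) (Fin p) ℝ
  | 0 => R
  | (k + 1) => ‖lam + k + 1‖ • Rseq lam R k +
      ‖∏ i ∈ Finset.range (k + 1), (lam + i)‖ • R +
      colMaxMat R * Rseq lam R k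

namespace Matrix

variable {n 𝕜 : Type*} [Fintype n]

theorem norm_mul_apply_le [NormedRing 𝕜] {E F : Matrix n n 𝕜} {R S : Matrix n n ℝ}
    (hE : ∀ a b, ‖E a b‖ ≤ R a b) (hF : ∀ a b, ‖F a b‖ ≤ S a b) (a b : n) :
    ‖(E * F) a b‖ ≤ (R * S) a b := by
  simp only [mul_apply]
  refine (norm_sum_le _ _).trans (Finset.sum_le_sum fun j _ => ?_)
  exact (norm_mul_le _ _).trans
    (mul_le_mul (hE a j) (hF j b) (norm_nonneg _) ((norm_nonneg _).trans (hE a j)))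

theorem mul_sub_smul_one_eq [DecidableEq n] [CommRing 𝕜] (B P : Matrix n n 𝕜) (x c : 𝕜) :
    B * P - (c * x) • (1 : Matrix n n 𝕜) =
      x • (P - c • 1) + c • (B - x • 1) + (B - x • 1) * (P - c • 1) := by
  simp only [sub_mul, mul_sub, Matrix.smul_mul, Matrix.mul_smul, Matrix.one_mul, Matrix.mul_one,
    smul_sub, smul_smul]
  module

theorem norm_mul_sub_smul_one_apply_le [DecidableEq n] [NormedCommRing 𝕜]
    {B P : Matrix n n 𝕜} {x c : 𝕜} {R S : Matrix n n ℝ}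
    (hB : ∀ a b, ‖(B - x • 1) a b‖ ≤ R a b) (hP : ∀ a b, ‖(P - c • 1) a b‖ ≤ S a b)
    (a b : n) :
    ‖(B * P - (c * x) • (1 : Matrix n n 𝕜)) a b‖ ≤
      ‖x‖ * S a b + ‖c‖ * R a b + (R * S) a b := by
  rw [mul_sub_smul_one_eq]
  simp only [add_apply, smul_apply, smul_eq_mul]
  calc _ ≤ ‖x * (P - c • 1) a b‖ + ‖c * (B - x • 1) a b‖ + ‖((B - x • 1) * (P - c • 1)) a b‖ :=
        norm_add₃_le
    _ ≤ ‖x‖ * S a b + ‖c‖ * R a b + (R * S) a b := by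
        gcongr
        · exact (norm_mul_le _ _).trans (by gcongr; exact hP a b)
        · exact (norm_mul_le _ _).trans (by gcongr; exact hB a b)
        · exact norm_mul_apply_le hB hP a b

end Matrix

section colMaxMat

variable {p : ℕ} {R : Matrix (Fin p) (Fin p) ℝ}

theorem le_colMaxMat (a b : Fin p) : R a b ≤ colMaxMat R a b :=
  le_ciSup (Set.finite_range fun i => R i b).bddAbove a

theorem mul_apply_le_colMaxMat_mul_apply {S : Matrix (Fin p) (Fin p) ℝ}
    (hS : ∀ i j, 0 ≤ S i j) (a b : Fin p) : (R * S) a b ≤ (colMaxMat R * S) a b := by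
  simp only [Matrix.mul_apply]
  exact Finset.sum_le_sum fun j _ => mul_le_mul_of_nonneg_right (le_colMaxMat a j) (hS j b)

theorem colMaxMat_nonneg (hR : ∀ i j, 0 ≤ R i j) (a b : Fin p) : 0 ≤ colMaxMat R a b :=
  Real.iSup_nonneg fun i => hR i b

theorem Rseq_nonneg (lam : ℂ) (hR : ∀ i j, 0 ≤ R i j) (k : ℕ) (a b : Fin p) :
    0 ≤ Rseq lam R k a b := by
  induction k generalizing a b with
  | zero => exact hR a b
  | succ k ih =>
    simp only [Rseq, Matrix.add_apply, Matrix.smul_apply, Matrix.mul_apply, smul_eq_mul]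
    exact add_nonneg (add_nonneg (mul_nonneg (norm_nonneg _) (ih a b))
      (mul_nonneg (norm_nonneg _) (hR a b)))
      (Finset.sum_nonneg fun j _ => mul_nonneg (colMaxMat_nonneg hR a j) (ih j b))

theorem norm_prod_sub_smul_one_apply_le_Rseq (lam : ℂ) (hR : ∀ i j, 0 ≤ R i j) (k : ℕ)
    (B : Fin (k + 1) → Matrix (Fin p) (Fin p) ℂ)
    (hB : ∀ i : Fin (k + 1), ∀ a b, ‖(B i - (lam + (i : ℕ)) • 1) a b‖ ≤ R a b) (a b : Fin p) :
    ‖((List.ofFn B).reverse.prod - (∏ i ∈ Finset.range (k + 1), (lam + i)) • 1) a b‖ ≤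
      Rseq lam R k a b := by
  induction k generalizing a b with
  | zero => simpa [Rseq] using hB 0 a b
  | succ k ih =>
    have hprod : (List.ofFn B).reverse.prod = B (Fin.last (k + 1)) *
        (List.ofFn fun i : Fin (k + 1) => B i.castSucc).reverse.prod := by
      rw [List.ofFn_succ', List.concat_eq_append, List.reverse_append]
      simp
    have hlast := hB (Fin.last (k + 1))
    push_cast [Fin.val_last, ← add_assoc] at hlast
    rw [hprod, Finset.prod_range_succ, Nat.cast_succ, ← add_assoc]
    refine (Matrix.norm_mul_sub_smul_one_apply_le hlast
      (ih (fun i => B i.castSucc) (fun i => hB i.castSucc)) a b).trans ?_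
    simp only [Rseq, Matrix.add_apply, Matrix.smul_apply, smul_eq_mul]
    gcongr
    exact mul_apply_le_colMaxMat_mul_apply (Rseq_nonneg lam hR k) a b

end colMaxMat

theorem stmt_9_general {p : ℕ} (lam : ℂ) (m : ℕ)
    (R : Matrix (Fin p) (Fin p) ℝ) (hR : ∀ i j, 0 ≤ R i j)
    (B : Fin m → Matrix (Fin p) (Fin p) ℂ)
    (hB : ∀ i : Fin m, ∀ a b, ‖
      (B i a b - ((lam + (i : ℕ)) • (1 : Matrix (Fin p) (Fin p) ℂ)) a b)‖ ≤ R a b) :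
    ∀ a b, ‖
        (((List.ofFn B).reverse.prod) a b -
          ((∏ i ∈ Finset.range m, (lam + i)) • (1 : Matrix (Fin p) (Fin p) ℂ)) a b)‖ ≤
      Rseq lam R (m - 1) a b := by
  intro a b
  rw [← Matrix.sub_apply]
  cases m with
  -- `m - 1` truncates to `0`, and the empty product leaves `‖0‖ ≤ R a b`.
  | zero => simpa [Rseq] using hR a b
  | succ k => exact norm_prod_sub_smul_one_apply_le_Rseq lam hR k B hB a b

theorem stmt_9 {p : ℕ} (lam : ℂ) (m : ℕ) (hm : 1 ≤ m)
    (R : Matrix (Fin p) (Fin p) ℝ) (hR : ∀ i j, 0 ≤ R i j)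
    (B : Fin m → Matrix (Fin p) (Fin p) ℂ)
    (hB : ∀ i : Fin m, ∀ a b, ‖
      (B i a b - ((lam + (i : ℕ)) • (1 : Matrix (Fin p) (Fin p) ℂ)) a b)‖ ≤ R a b) :
    ∀ a b, ‖
        (((List.ofFn B).reverse.prod) a b -
          ((∏ i ∈ Finset.range m, (lam + i)) • (1 : Matrix (Fin p) (Fin p) ℂ)) a b)‖ ≤
      Rseq lam R (m - 1) a b :=
  stmt_9_general lam m R hR B hB
end

section
/- Let n₁, …, n_s ≥ 1 be integers with p = n₁ + ⋯ + n_s, and let M = diag(N_{n₁}, …, N_{n_s}) be the p×p block-diagonal matrix whose ℓ-th block is the n_ℓ×n_ℓ nilpotent Jordan block N_{n_ℓ} (ones on the superdiagonal, zeros elsewhere); set n_max := max_ℓ n_ℓ. Let b₀, …, b_{n_max−1} ∈ ℂ and C := ∑_{i=0}^{n_max−1} b_i·M^i. Let R be a p×p real matrix with nonnegative entries; for each ℓ, let R^{(ℓ)} be the p×n_ℓ submatrix of R consisting of the columns with indices in block ℓ, let rc^{(ℓ)} ∈ ℝ^p be the column vector with rc^{(ℓ)}_i := max_j (R^{(ℓ)})_{ij},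 let w^{(ℓ)} be the 1×n_ℓ row vector whose j-th entry (1 ≤ j ≤ n_ℓ) is ∑_{i=0}^{j−1} |b_i|, and let Q := [rc^{(1)}·w^{(1)}, …, rc^{(s)}·w^{(s)}] be the p×p matrix formed by these rank-one column blocks. Then R·|C| ≤ Q entrywise. -/
/-!
The powers of the block nilpotent Jordan matrix `M` are the block shifts: `(M ^ t) a c = 1` exactly
when `a`, `c` lie in the same block and `c` sits `t` places right of `a`. Hence column `j` of
`C = ∑ bᵢ Mⁱ` is supported on the block of `j`, with entry `b (j.2 - k.2)` in row `k` for
`k.2 ≤ j.2`. Bounding each `R i k` in that block by the block maximum of row `i` leaves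
`∑_{k.2 ≤ j.2} ‖b (j.2 - k.2)‖ = ∑_{t ≤ j.2} ‖b t‖`.
-/

open Finset Matrix

theorem Sigma.sum_ite_eq_fst {ι : Type*} [Fintype ι] [DecidableEq ι] {κ : ι → Type*}
    [∀ i, Fintype (κ i)] {M : Type*} [AddCommMonoid M] (i : ι) (f : (Σ i, κ i) → M) :
    ∑ e, (if i = e.1 then f e else 0) = ∑ k : κ i, f ⟨i, k⟩ := by
  rw [Fintype.sum_sigma, Finset.sum_eq_single i]
  · simp only [if_true]
  · intro j _ hj
    exact Finset.sum_eq_zero fun k _ => if_neg (Ne.symm hj)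
  · simp

theorem Fin.sum_univ_ite_val_eq {M : Type*} [AddCommMonoid M] {N : ℕ} (m : ℕ) (f : Fin N → M) :
    ∑ k : Fin N, (if (k : ℕ) = m then f k else 0) = if h : m < N then f ⟨m, h⟩ else 0 := by
  split_ifs with h
  · rw [Finset.sum_eq_single ⟨m, h⟩] <;> simp +contextual [Fin.ext_iff]
  · exact Finset.sum_eq_zero fun k _ => if_neg (by omega)

theorem Fin.sum_univ_ite_le_sub {M : Type*} [AddCommMonoid M] {N m : ℕ} (hm : m < N)
    (f : ℕ → M) :
    ∑ a : Fin N, (if (a : ℕ) ≤ m then f (m - a) else 0) = ∑ t ∈ range (m + 1), f t := by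
  rw [Fin.sum_univ_eq_sum_range (fun a => if a ≤ m then f (m - a) else 0), ← sum_filter,
    ← sum_range_reflect f]
  have hfilter : (range N).filter (· ≤ m) = range (m + 1) := by
    ext a; simp only [mem_filter, mem_range]; omega
  rw [hfilter]
  exact sum_congr rfl fun a _ => by rw [Nat.add_sub_cancel]

theorem sum_mul_le_ciSup_mul_sum {κ : Type*} [Fintype κ] (f g : κ → ℝ) (hg : ∀ k, 0 ≤ g k) :
    ∑ k, f k * g k ≤ (⨆ k, f k) * ∑ k, g k := by
  rw [mul_sum]
  exact sum_le_sum fun k _ =>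
    mul_le_mul_of_nonneg_right (le_ciSup (Set.finite_range f).bddAbove k) (hg k)

section BlockNilpotentJordan

variable {ι : Type*} [DecidableEq ι] {n : ι → ℕ}

def blockNilpotentJordan (n : ι → ℕ) (α : Type*) [Zero α] [One α] :
    Matrix (Σ ℓ, Fin (n ℓ)) (Σ ℓ, Fin (n ℓ)) α :=
  of fun a c => if a.1 = c.1 ∧ (c.2 : ℕ) = a.2 + 1 then 1 else 0

theorem blockNilpotentJordan_apply {α : Type*} [Zero α] [One α] (a c : Σ ℓ, Fin (n ℓ)) :
    blockNilpotentJordan n α a c = if a.1 = c.1 ∧ (c.2 : ℕ) = a.2 + 1 then 1 else 0 := rfl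

theorem blockNilpotentJordan_pow_apply [Fintype ι] {α : Type*} [Semiring α] (t : ℕ)
    (a c : Σ ℓ, Fin (n ℓ)) :
    (blockNilpotentJordan n α ^ t) a c =
      if a.1 = c.1 ∧ (c.2 : ℕ) = a.2 + t then 1 else 0 := by
  induction t generalizing a with
  | zero =>
    rw [pow_zero, one_apply, add_zero]
    exact if_congr (Sigma.ext_iff.trans (and_congr_right fun h =>
      (Fin.heq_ext_iff (congrArg n h)).trans eq_comm)) rfl rfl
  | succ t ih =>
    rw [pow_succ', mul_apply]
    simp only [blockNilpotentJordan_apply, ite_and, ite_mul, one_mul, zero_mul]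
    rw [Sigma.sum_ite_eq_fst, Fin.sum_univ_ite_val_eq]
    by_cases h : (a.2 : ℕ) + 1 < n a.1
    · rw [dif_pos h, ih, add_assoc, add_comm 1 t, ← ite_and]
    · rw [dif_neg h, ← ite_and, if_neg]
      rintro ⟨hℓ, hk⟩
      have := c.2.isLt
      have := congrArg n hℓ
      omega

theorem sum_smul_blockNilpotentJordan_pow_apply [Fintype ι] {α : Type*} [Semiring α]
    (b : ℕ → α) {N : ℕ} (a c : Σ ℓ, Fin (n ℓ)) (hN : n c.1 ≤ N) :
    (∑ i ∈ range N, b i • blockNilpotentJordan n α ^ i) a c =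
      if a.1 = c.1 ∧ (a.2 : ℕ) ≤ c.2 then b (c.2 - a.2) else 0 := by
  simp only [Matrix.sum_apply, Matrix.smul_apply, blockNilpotentJordan_pow_apply, smul_eq_mul,
    mul_ite, mul_one, mul_zero]
  by_cases h : a.1 = c.1 ∧ (a.2 : ℕ) ≤ c.2
  · have hlt : (c.2 : ℕ) - a.2 < N := by have := c.2.isLt; omega
    rw [if_pos h, sum_eq_single_of_mem _ (mem_range.2 hlt)]
    · exact if_pos ⟨h.1, by omega⟩
    · exact fun i _ hi => if_neg fun hc => hi (by omega)
  · rw [if_neg h]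
    exact sum_eq_zero fun i _ => if_neg fun hc => h ⟨hc.1, by omega⟩

end BlockNilpotentJordan

theorem stmt_14_general {s : ℕ} (n : Fin s → ℕ)
    -- `M` is the block-diagonal matrix of nilpotent Jordan blocks, indexed by
    -- the sigma type `(ℓ : Fin s) × Fin (n ℓ)` (block `ℓ`, position within block).
    (M : Matrix ((ℓ : Fin s) × Fin (n ℓ)) ((ℓ : Fin s) × Fin (n ℓ)) ℂ)
    (hM : M = Matrix.of fun a b =>
      if a.1 = b.1 ∧ (b.2 : ℕ) = (a.2 : ℕ) + 1 then 1 else 0)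
    (b : ℕ → ℂ)
    (C : Matrix ((ℓ : Fin s) × Fin (n ℓ)) ((ℓ : Fin s) × Fin (n ℓ)) ℂ)
    (hC : C = ∑ i ∈ Finset.range (Finset.univ.sup n), b i • M ^ i)
    (R : Matrix ((ℓ : Fin s) × Fin (n ℓ)) ((ℓ : Fin s) × Fin (n ℓ)) ℝ) :
    ∀ i j, (R * Matrix.of fun a c => ‖C a c‖) i j ≤
      (⨆ a : Fin (n j.1), R i ⟨j.1, a⟩) *
        ∑ t ∈ Finset.range ((j.2 : ℕ) + 1), ‖b t‖ := by
  intro i j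
  have hcol : ∀ k, ‖C k j‖ = if k.1 = j.1 ∧ (k.2 : ℕ) ≤ j.2 then ‖b (j.2 - k.2)‖ else 0 := by
    intro k
    rw [hC, show M = blockNilpotentJordan n ℂ from hM,
      sum_smul_blockNilpotentJordan_pow_apply b k j (le_sup (mem_univ _))]
    split_ifs <;> simp
  calc (R * Matrix.of fun a c => ‖C a c‖) i j
      = ∑ a : Fin (n j.1), R i ⟨j.1, a⟩ * if (a : ℕ) ≤ j.2 then ‖b (j.2 - a)‖ else 0 := by
        simp only [mul_apply, of_apply, hcol, eq_comm (b := j.1), ite_and, mul_ite, mul_zero]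
        exact Sigma.sum_ite_eq_fst j.1 _
    _ ≤ (⨆ a : Fin (n j.1), R i ⟨j.1, a⟩) *
          ∑ a : Fin (n j.1), if (a : ℕ) ≤ j.2 then ‖b (j.2 - a)‖ else 0 :=
        sum_mul_le_ciSup_mul_sum _ _ fun a => by positivity
    _ = _ := by congr 1; exact Fin.sum_univ_ite_le_sub j.2.isLt fun t => ‖b t‖

theorem stmt_14 {s : ℕ} (hs : 1 ≤ s) (n : Fin s → ℕ) (hn : ∀ ℓ, 1 ≤ n ℓ)
    -- `M` is the block-diagonal matrix of nilpotent Jordan blocks, indexed by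
    -- the sigma type `(ℓ : Fin s) × Fin (n ℓ)` (block `ℓ`, position within block).
    (M : Matrix ((ℓ : Fin s) × Fin (n ℓ)) ((ℓ : Fin s) × Fin (n ℓ)) ℂ)
    (hM : M = Matrix.of fun a b =>
      if a.1 = b.1 ∧ (b.2 : ℕ) = (a.2 : ℕ) + 1 then 1 else 0)
    (b : ℕ → ℂ)
    (C : Matrix ((ℓ : Fin s) × Fin (n ℓ)) ((ℓ : Fin s) × Fin (n ℓ)) ℂ)
    (hC : C = ∑ i ∈ Finset.range (Finset.univ.sup n), b i • M ^ i)
    (R : Matrix ((ℓ : Fin s) × Fin (n ℓ)) ((ℓ : Fin s) × Fin (n ℓ)) ℝ)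
    (hR : ∀ i j, 0 ≤ R i j) :
    ∀ i j, (R * Matrix.of fun a c => ‖C a c‖) i j ≤
      (⨆ a : Fin (n j.1), R i ⟨j.1, a⟩) *
        ∑ t ∈ Finset.range ((j.2 : ℕ) + 1), ‖b t‖ :=
  stmt_14_general n M hM b C hC R
end

section
/- Let λ ∈ ℂ with Re(λ) > 0, let n ≥ 1, and let N be the n×n nilpotent Jordan block (ones on the superdiagonal, zeros elsewhere). Then ∫₀^∞ e^{−t} exp((log t)·((λ−1)·I_n + N)) dt = ∑_{k=0}^{n−1} (Γ^{(k)}(λ)/k!) · N^k, where exp is the matrix exponential and Γ^{(k)} denotes the k-th derivative of the complex Gamma function. -/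
open Real Set MeasureTheory Filter Asymptotics Topology

/-!
Because `N` commutes with the scalar part and `N ^ n = 0`, the exponential series terminates:
`exp ((log t) • ((λ - 1) • 1 + N)) = t ^ (λ - 1) • ∑_{k < n} ((log t) ^ k / k!) • N ^ k`.
Entry by entry the integral is therefore a combination of the Mellin transforms at `λ` of
`t ↦ (log t) ^ k * exp (-t)`. Since `Γ` is the Mellin transform of `exp (-t)` and differentiating a
Mellin transform in `s` multiplies the integrand by `log t`, that transform is `Γ^{(k)}(λ)`.
-/

theorem NormedSpace.exp_eq_sum_range_of_pow_eq_zero {𝕂 𝔸 : Type*} [Field 𝕂] [CharZero 𝕂]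
    [Ring 𝔸] [Algebra 𝕂 𝔸] [TopologicalSpace 𝔸] [IsTopologicalRing 𝔸] {a : 𝔸} {n : ℕ}
    (h : a ^ n = 0) :
    NormedSpace.exp a = ∑ k ∈ Finset.range n, ((k.factorial : 𝕂)⁻¹) • a ^ k := by
  rw [NormedSpace.exp_eq_tsum 𝕂]
  refine tsum_eq_sum fun k hk => ?_
  rw [pow_eq_zero_of_le (by simpa using hk) h, smul_zero]

namespace Matrix

variable {ι : Type*} [Fintype ι] [DecidableEq ι]

theorem exp_smul_one_add (z : ℂ) (A : Matrix ι ι ℂ) :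
    NormedSpace.exp (z • (1 : Matrix ι ι ℂ) + A) = Complex.exp z • NormedSpace.exp A := by
  rw [exp_add_of_commute _ _ ((Commute.one_left A).smul_left z), smul_one_eq_diagonal,
    exp_diagonal]
  ext i j
  simp [Pi.exp_def, ← Complex.exp_eq_exp_ℂ]

theorem exp_smul_smul_one_add_of_pow_eq_zero (c μ : ℂ) {A : Matrix ι ι ℂ} {n : ℕ}
    (h : A ^ n = 0) :
    NormedSpace.exp (c • (μ • (1 : Matrix ι ι ℂ) + A)) =
      Complex.exp (c * μ) • ∑ k ∈ Finset.range n, (c ^ k / k.factorial) • A ^ k := by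
  have hcA : (c • A) ^ n = 0 := by rw [smul_pow, h, smul_zero]
  rw [smul_add, smul_smul, exp_smul_one_add,
    NormedSpace.exp_eq_sum_range_of_pow_eq_zero (𝕂 := ℂ) hcA]
  congr 1
  refine Finset.sum_congr rfl fun k _ => ?_
  rw [smul_pow, smul_smul, inv_mul_eq_div]

def upperShift (n : ℕ) (R : Type*) [Zero R] [One R] : Matrix (Fin n) (Fin n) R :=
  of fun i j => if (j : ℕ) = i + 1 then 1 else 0

theorem upperShift_pow_apply {R : Type*} [Semiring R] (n k : ℕ) (i j : Fin n) :
    (upperShift n R ^ k) i j = if (j : ℕ) = i + k then 1 else 0 := by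
  induction k generalizing j with
  | zero => simp [one_apply, eq_comm, Fin.val_eq_val]
  | succ k ih =>
    rw [pow_succ, mul_apply]
    simp only [ih, ite_mul, one_mul, zero_mul]
    by_cases h : (i : ℕ) + k < n
    · rw [Finset.sum_eq_single_of_mem ⟨i + k, h⟩ (Finset.mem_univ _)]
      · simp [upperShift, ← add_assoc]
      · intro l _ hl
        rw [if_neg fun hc => hl (Fin.ext hc)]
    · rw [Finset.sum_eq_zero fun l _ => if_neg (by omega), if_neg (by omega)]

theorem upperShift_pow_self (n : ℕ) (R : Type*) [Semiring R] : upperShift n R ^ n = 0 := by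
  ext i j
  rw [upperShift_pow_apply, if_neg (by omega), zero_apply]

end Matrix

theorem isBigO_rpow_neg_nhdsGT_zero {a b : ℝ} (hab : a ≤ b) :
    (fun t : ℝ => t ^ (-a)) =O[𝓝[>] 0] fun t => t ^ (-b) := by
  refine .of_bound' ?_
  filter_upwards [Ioo_mem_nhdsGT zero_lt_one] with t ht
  rw [norm_of_nonneg (rpow_nonneg ht.1.le _), norm_of_nonneg (rpow_nonneg ht.1.le _)]
  exact rpow_le_rpow_of_exponent_ge ht.1 ht.2.le (neg_le_neg hab)

namespace Complex

noncomputable def logPowMulExpNeg (k : ℕ) (t : ℝ) : ℂ :=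
  (Real.log t : ℂ) ^ k * (Real.exp (-t) : ℂ)

theorem logPowMulExpNeg_zero : logPowMulExpNeg 0 = fun t => (Real.exp (-t) : ℂ) := by
  ext t
  simp [logPowMulExpNeg]

theorem log_smul_logPowMulExpNeg (k : ℕ) :
    (fun t : ℝ => Real.log t • logPowMulExpNeg k t) = logPowMulExpNeg (k + 1) := by
  ext t
  simp only [logPowMulExpNeg, real_smul, pow_succ']
  ring

theorem locallyIntegrableOn_logPowMulExpNeg (k : ℕ) :
    LocallyIntegrableOn (logPowMulExpNeg k) (Ioi 0) := by
  refine ContinuousOn.locallyIntegrableOn ?_ measurableSet_Ioi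
  refine .mul ?_ (by fun_prop)
  exact (continuous_ofReal.comp_continuousOn (continuousOn_log.mono fun _ hx => ne_of_gt hx)).pow k

theorem logPowMulExpNeg_isBigO_atTop (k : ℕ) (a : ℝ) :
    logPowMulExpNeg k =O[atTop] (· ^ (-a)) := by
  induction k generalizing a with
  | zero =>
    rw [logPowMulExpNeg_zero, ← isBigO_norm_left]
    simp_rw [norm_real, isBigO_norm_left]
    simpa only [neg_one_mul] using (isLittleO_exp_neg_mul_rpow_atTop zero_lt_one _).isBigO
  | succ k ih =>
    rw [← log_smul_logPowMulExpNeg]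
    exact isBigO_rpow_top_log_smul (lt_add_one a) (ih (a + 1))

theorem logPowMulExpNeg_isBigO_nhdsGT_zero (k : ℕ) {b : ℝ} (hb : 0 < b) :
    logPowMulExpNeg k =O[𝓝[>] 0] (· ^ (-b)) := by
  induction k generalizing b with
  | zero =>
    have hexp : logPowMulExpNeg 0 =O[𝓝[>] 0] fun t : ℝ => t ^ (-0 : ℝ) := by
      simp_rw [neg_zero, rpow_zero]
      refine isBigO_const_of_tendsto (y := (1 : ℂ)) ?_ one_ne_zero
      have hcont : Continuous fun t : ℝ => (Real.exp (-t) : ℂ) := by fun_prop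
      simpa [logPowMulExpNeg_zero] using (hcont.tendsto 0).mono_left nhdsWithin_le_nhds
    exact hexp.trans (isBigO_rpow_neg_nhdsGT_zero hb.le)
  | succ k ih =>
    rw [← log_smul_logPowMulExpNeg]
    exact isBigO_rpow_zero_log_smul (half_lt_self hb) (ih (half_pos hb))

theorem mellinConvergent_logPowMulExpNeg (k : ℕ) {s : ℂ} (hs : 0 < s.re) :
    MellinConvergent (logPowMulExpNeg k) s :=
  mellinConvergent_of_isBigO_rpow (locallyIntegrableOn_logPowMulExpNeg k)
    (logPowMulExpNeg_isBigO_atTop k _) (lt_add_one s.re)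
    (logPowMulExpNeg_isBigO_nhdsGT_zero k (half_pos hs)) (half_lt_self hs)

theorem hasDerivAt_mellin_logPowMulExpNeg (k : ℕ) {s : ℂ} (hs : 0 < s.re) :
    HasDerivAt (mellin (logPowMulExpNeg k)) (mellin (logPowMulExpNeg (k + 1)) s) s := by
  rw [← log_smul_logPowMulExpNeg]
  exact (mellin_hasDerivAt_of_isBigO_rpow (locallyIntegrableOn_logPowMulExpNeg k)
    (logPowMulExpNeg_isBigO_atTop k _) (lt_add_one s.re)
    (logPowMulExpNeg_isBigO_nhdsGT_zero k (half_pos hs)) (half_lt_self hs)).2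

theorem iteratedDeriv_Gamma_eq_mellin (k : ℕ) {s : ℂ} (hs : 0 < s.re) :
    iteratedDeriv k Gamma s = mellin (logPowMulExpNeg k) s := by
  induction k generalizing s with
  | zero =>
    rw [iteratedDeriv_zero, Gamma_eq_integral hs, GammaIntegral_eq_mellin, logPowMulExpNeg_zero]
  | succ k ih =>
    have hnear : iteratedDeriv k Gamma =ᶠ[𝓝 s] mellin (logPowMulExpNeg k) :=
      mem_of_superset ((isOpen_lt continuous_const continuous_re).mem_nhds hs) fun _ hz => ih hz
    rw [iteratedDeriv_succ, hnear.deriv_eq, (hasDerivAt_mellin_logPowMulExpNeg k hs).deriv]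

end Complex

theorem Matrix.integral_exp_neg_mul_exp_log_smul_eq_sum_iteratedDeriv_Gamma {ι : Type*}
    [Fintype ι] [DecidableEq ι] {lam : ℂ} (hlam : 0 < lam.re) {N : Matrix ι ι ℂ} {n : ℕ}
    (hN : N ^ n = 0) :
    (Matrix.of fun i j => ∫ t in Ioi (0 : ℝ), (Real.exp (-t) : ℂ) *
        (NormedSpace.exp ((Real.log t : ℂ) • ((lam - 1) • (1 : Matrix ι ι ℂ) + N)) i j)) =
      ∑ k ∈ Finset.range n, (iteratedDeriv k Complex.Gamma lam / k.factorial) • N ^ k := by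
  ext i j
  have hintegrand : ∀ t ∈ Ioi (0 : ℝ), (Real.exp (-t) : ℂ) *
      NormedSpace.exp ((Real.log t : ℂ) • ((lam - 1) • (1 : Matrix ι ι ℂ) + N)) i j =
      ∑ k ∈ Finset.range n, (N ^ k) i j / k.factorial *
        ((t : ℂ) ^ (lam - 1) • Complex.logPowMulExpNeg k t) := by
    intro t ht
    have hcpow : Complex.exp (Real.log t * (lam - 1)) = (t : ℂ) ^ (lam - 1) := by
      rw [Complex.cpow_def_of_ne_zero (by exact_mod_cast ht.ne'), Complex.ofReal_log ht.le]
    rw [exp_smul_smul_one_add_of_pow_eq_zero _ _ hN, hcpow, smul_apply, sum_apply,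
      smul_eq_mul, Finset.mul_sum, Finset.mul_sum]
    refine Finset.sum_congr rfl fun k _ => ?_
    simp only [smul_apply, smul_eq_mul, Complex.logPowMulExpNeg]
    ring
  simp only [of_apply, sum_apply, smul_apply, smul_eq_mul]
  rw [setIntegral_congr_fun measurableSet_Ioi hintegrand,
    integral_finsetSum _ fun k _ => (Complex.mellinConvergent_logPowMulExpNeg k hlam).const_mul _]
  refine Finset.sum_congr rfl fun k _ => ?_
  rw [integral_const_mul, ← mellin, ← Complex.iteratedDeriv_Gamma_eq_mellin k hlam]
  ring

theorem stmt_17_general (lam : ℂ) (hlam : 0 < lam.re) (n : ℕ)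
    (N : Matrix (Fin n) (Fin n) ℂ)
    (hN : N = Matrix.of fun i j : Fin n => if (j : ℕ) = (i : ℕ) + 1 then (1:ℂ) else 0) :
    (Matrix.of fun i j : Fin n => ∫ t in Set.Ioi (0:ℝ), (Real.exp (-t) : ℂ) *
        (NormedSpace.exp ((Real.log t : ℂ) •
          ((lam - 1) • (1 : Matrix (Fin n) (Fin n) ℂ) + N)) i j)) =
      ∑ k ∈ Finset.range n,
        (iteratedDeriv k Complex.Gamma lam / k.factorial) • N ^ k := by
  subst hN
  exact Matrix.integral_exp_neg_mul_exp_log_smul_eq_sum_iteratedDeriv_Gamma hlam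
    (Matrix.upperShift_pow_self n ℂ)

theorem stmt_17 (lam : ℂ) (hlam : 0 < lam.re) (n : ℕ) (hn : 1 ≤ n)
    (N : Matrix (Fin n) (Fin n) ℂ)
    (hN : N = Matrix.of fun i j : Fin n => if (j : ℕ) = (i : ℕ) + 1 then (1:ℂ) else 0) :
    (Matrix.of fun i j : Fin n => ∫ t in Set.Ioi (0:ℝ), (Real.exp (-t) : ℂ) *
        (NormedSpace.exp ((Real.log t : ℂ) •
          ((lam - 1) • (1 : Matrix (Fin n) (Fin n) ℂ) + N)) i j)) =
      ∑ k ∈ Finset.range n,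
        (iteratedDeriv k Complex.Gamma lam / k.factorial) • N ^ k :=
  stmt_17_general lam hlam n N hN
end
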